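/- arXiv:2404.16663 — 6 statements merged into one kernel-verified Lean document; each statement's English description precedes it below -/
import Mathlib

section
/- Let s : ℕ → Fin (G+1) be an infinite sequence of concept group values with G ≥ 1, and let β ≥ G. Suppose for every k ∈ {1,...,G}: (a) there exists m < β with s(m) = k, and (b) for every m₁ with s(m₁) = k there exists m₂ with m₁ < m₂ ≤ m₁ + β and s(m₂) = k. If for each k the limiting frequency F(k) := lim_{n→∞} |{m < n : s(m) = k}| / n exists, then for all k₁, k₂ ∈ {1,...,G}, |F(k₁) − F(k₂)| ≤ 1 − G/β. -/
/-!
Bounded repetition forces every window of `β` consecutive positions to contain each nonzero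
value `k`, so `k` occurs at least `j` times among the first `j * β` positions and
`F k ≥ 1 / β`. The frequencies of the `G` nonzero values sum to at most `1`, hence
`F k₁ ≤ 1 - (G - 1) / β`, and subtracting `F k₂ ≥ 1 / β` gives the bound.
-/

open Finset Filter Topology

def IsBoundedRepetition (p : ℕ → Prop) (β : ℕ) : Prop :=
  (∃ m < β, p m) ∧ ∀ m₁, p m₁ → ∃ m₂, m₁ < m₂ ∧ m₂ ≤ m₁ + β ∧ p m₂

namespace IsBoundedRepetition

variable {p : ℕ → Prop} {β : ℕ}

theorem exists_mem_Ico (hp : IsBoundedRepetition p β) (a : ℕ) :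
    ∃ m, a ≤ m ∧ m < a + β ∧ p m := by
  induction a with
  | zero => simpa using hp.1
  | succ a ih =>
    obtain ⟨m, ham, hma, hm⟩ := ih
    rcases ham.eq_or_lt with rfl | ham
    · obtain ⟨m', hmm', hm'm, hm'⟩ := hp.2 a hm
      exact ⟨m', hmm', by omega, hm'⟩
    · exact ⟨m, ham, by omega, hm⟩

variable [DecidablePred p]

theorem le_count_mul (hp : IsBoundedRepetition p β) (j : ℕ) : j ≤ Nat.count p (j * β) := by
  induction j with
  | zero => simp
  | succ j ih =>
    obtain ⟨m, hjm, hmj, hm⟩ := hp.exists_mem_Ico (j * β)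
    calc j + 1 ≤ Nat.count p m + 1 := by grw [ih, Nat.count_monotone p hjm]
      _ ≤ Nat.count p ((j + 1) * β) :=
        Nat.count_strict_mono hm (by rwa [Nat.succ_mul])

theorem inv_le_of_tendsto (hp : IsBoundedRepetition p β) {F : ℝ}
    (hF : Tendsto (fun n : ℕ => (#{m ∈ range n | p m} : ℝ) / n) atTop (𝓝 F)) :
    (β : ℝ)⁻¹ ≤ F := by
  obtain ⟨m, hmβ, -⟩ := hp.1
  have hβ : (0 : ℝ) < β := by exact_mod_cast (m.zero_le.trans_lt hmβ)
  have hmul : Tendsto (fun j : ℕ => j * β) atTop atTop :=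
    tendsto_atTop_mono (fun j => Nat.le_mul_of_pos_right j (by exact_mod_cast hβ)) tendsto_id
  refine ge_of_tendsto (hF.comp hmul) ?_
  filter_upwards [eventually_ge_atTop 1] with j hj
  have hjpos : (0 : ℝ) < j := by exact_mod_cast hj
  have hcount : (j : ℝ) ≤ #{m ∈ range (j * β) | p m} := by
    rw [← Nat.count_eq_card_filter_range]
    exact_mod_cast hp.le_count_mul j
  simp only [Function.comp_apply, Nat.cast_mul]
  rwa [le_div_iff₀ (by positivity), mul_comm (j : ℝ), ← mul_assoc, inv_mul_cancel₀ hβ.ne',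
    one_mul]

end IsBoundedRepetition

theorem sum_card_filter_range_le {α : Type*} [DecidableEq α] (s : ℕ → α) (S : Finset α)
    (n : ℕ) : ∑ k ∈ S, #{m ∈ range n | s m = k} ≤ n :=
  (sum_card_fiberwise_eq_card_filter _ _ _).trans_le ((card_filter_le _ _).trans (card_range n).le)

theorem sum_le_one_of_tendsto_card_filter_div {α : Type*} [DecidableEq α] (s : ℕ → α)
    (S : Finset α) {F : α → ℝ}
    (hF : ∀ k ∈ S, Tendsto (fun n : ℕ => (#{m ∈ range n | s m = k} : ℝ) / n) atTop (𝓝 (F k))) :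
    ∑ k ∈ S, F k ≤ 1 := by
  refine le_of_tendsto (tendsto_finsetSum S hF) ?_
  filter_upwards [eventually_ge_atTop 1] with n hn
  rw [← sum_div, div_le_one (by exact_mod_cast hn)]
  exact_mod_cast sum_card_filter_range_le s S n

theorem sub_le_one_sub_card_mul {ι : Type*} {S : Finset ι} {F : ι → ℝ} {c : ℝ}
    (hsum : ∑ k ∈ S, F k ≤ 1) (hc : ∀ k ∈ S, c ≤ F k) {a b : ι} (ha : a ∈ S) (hb : b ∈ S) :
    F a - F b ≤ 1 - #S * c := by
  have hexcess : F a - c ≤ ∑ k ∈ S, (F k - c) :=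
    single_le_sum (f := fun k => F k - c) (fun k hk => sub_nonneg.2 (hc k hk)) ha
  rw [sum_sub_distrib, sum_const, nsmul_eq_mul] at hexcess
  linarith [hc b hb]

theorem stmt_0_general (G β : ℕ)
    (s : ℕ → Fin (G + 1))
    (hfair : ∀ k : Fin (G + 1), k ≠ 0 →
      (∃ m < β, s m = k) ∧
      (∀ m₁, s m₁ = k → ∃ m₂, m₁ < m₂ ∧ m₂ ≤ m₁ + β ∧ s m₂ = k))
    (F : Fin (G + 1) → ℝ)
    (hF : ∀ k : Fin (G + 1), k ≠ 0 →
      Filter.Tendsto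
        (fun n : ℕ => (((Finset.range n).filter (fun m => s m = k)).card : ℝ) / n)
        Filter.atTop (nhds (F k))) :
    ∀ k₁ k₂ : Fin (G + 1), k₁ ≠ 0 → k₂ ≠ 0 →
      |F k₁ - F k₂| ≤ 1 - (G : ℝ) / (β : ℝ) := by
  intro k₁ k₂ hk₁ hk₂
  let S : Finset (Fin (G + 1)) := univ.erase 0
  have hS : ∀ k, k ∈ S ↔ k ≠ 0 := fun k => by simp [S]
  have hcard : #S = G := by simp [S]
  have hsum : ∑ k ∈ S, F k ≤ 1 :=
    sum_le_one_of_tendsto_card_filter_div s S fun k hk => hF k ((hS k).1 hk)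
  have hlow : ∀ k ∈ S, (β : ℝ)⁻¹ ≤ F k := fun k hk =>
    IsBoundedRepetition.inv_le_of_tendsto (hfair k ((hS k).1 hk)) (hF k ((hS k).1 hk))
  have hgap : ∀ a b, a ≠ 0 → b ≠ 0 → F a - F b ≤ 1 - (G : ℝ) / β := fun a b ha hb => by
    simpa [hcard, div_eq_mul_inv] using
      sub_le_one_sub_card_mul hsum hlow ((hS a).2 ha) ((hS b).2 hb)
  exact abs_sub_le_iff.2 ⟨hgap k₁ k₂ hk₁ hk₂, hgap k₂ k₁ hk₂ hk₁⟩

/-- frequency gap bound under β-bounded repetition fairness. -/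
theorem stmt_0 (G β : ℕ) (hG : 1 ≤ G) (hβ : G ≤ β)
    (s : ℕ → Fin (G + 1))
    (hfair : ∀ k : Fin (G + 1), k ≠ 0 →
      (∃ m < β, s m = k) ∧
      (∀ m₁, s m₁ = k → ∃ m₂, m₁ < m₂ ∧ m₂ ≤ m₁ + β ∧ s m₂ = k))
    (F : Fin (G + 1) → ℝ)
    (hF : ∀ k : Fin (G + 1), k ≠ 0 →
      Filter.Tendsto
        (fun n : ℕ => (((Finset.range n).filter (fun m => s m = k)).card : ℝ) / n)
        Filter.atTop (nhds (F k))) :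
    ∀ k₁ k₂ : Fin (G + 1), k₁ ≠ 0 → k₂ ≠ 0 →
      |F k₁ - F k₂| ≤ 1 - (G : ℝ) / (β : ℝ) :=
  stmt_0_general G β s hfair F hF
end

section
/- Let s : ℕ → Fin (G+1), G ≥ 1, be β-bounded-repetition fair for all values k ∈ {1,...,G} (each k appears within the first β positions and recurs with gap at most β). Then for every k ∈ {1,...,G}, limsup_{n→∞} |{m < n : s(m) = k}| / n ≤ 1 − (G−1)/β. -/
/-!
A value that first appears before position `β` and recurs with gaps at most `β` occupies at least
`⌊n/β⌋` of the first `n` positions. The `G - 1` nonzero values other than `k` thus fill at least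
`(G - 1)⌊n/β⌋` positions below `n`, all distinct from those of `k`, so the frequency of `k` up to `n`
is at most `1 - (G - 1)⌊n/β⌋/n`, which tends to `1 - (G - 1)/β`.
-/

open Filter Finset Topology

section BoundedGaps

variable (P : ℕ → Prop) {β : ℕ}

lemma exists_mem_Ico_of_bounded_gaps (h₀ : ∃ m < β, P m)
    (hgap : ∀ m, P m → ∃ m', m < m' ∧ m' ≤ m + β ∧ P m') (x : ℕ) :
    ∃ m ∈ Ico x (x + β), P m := by
  induction x with
  | zero => simpa using h₀
  | succ x ih =>
    obtain ⟨m, hm, hPm⟩ := ih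
    rw [mem_Ico] at hm
    by_cases hmx : m = x
    · obtain ⟨m', hlt, hle, hPm'⟩ := hgap m hPm
      exact ⟨m', mem_Ico.2 ⟨by omega, by omega⟩, hPm'⟩
    · exact ⟨m, mem_Ico.2 ⟨by omega, by omega⟩, hPm⟩

-- Each of the `n / β` disjoint windows `[tβ, (t+1)β)` inside `[0, n)` contains a position in `P`.
lemma div_le_card_filter_range_of_bounded_gaps [DecidablePred P] (h₀ : ∃ m < β, P m)
    (hgap : ∀ m, P m → ∃ m', m < m' ∧ m' ≤ m + β ∧ P m') (n : ℕ) :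
    n / β ≤ #{m ∈ range n | P m} := by
  choose f hf hPf using exists_mem_Ico_of_bounded_gaps P h₀ hgap
  have hwin (t : ℕ) : t * β ≤ f (t * β) ∧ f (t * β) < (t + 1) * β := by
    have := mem_Ico.1 (hf (t * β)); constructor <;> nlinarith
  have hmaps : Set.MapsTo (fun t => f (t * β)) (range (n / β) : Set ℕ)
      ({m ∈ range n | P m} : Finset ℕ) := by
    intro t ht
    rw [mem_coe, mem_range] at ht
    rw [mem_coe, mem_filter, mem_range]
    have : (t + 1) * β ≤ n / β * β := Nat.mul_le_mul_right _ ht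
    exact ⟨by linarith [(hwin t).2, Nat.div_mul_le_self n β], hPf _⟩
  have hmono : StrictMono fun t => f (t * β) :=
    strictMono_nat_of_lt_succ fun t => (hwin t).2.trans_le (hwin (t + 1)).1
  simpa using card_le_card_of_injOn _ hmaps hmono.injective.injOn

end BoundedGaps

lemma card_filter_range_add_mul_le {α : Type*} [DecidableEq α] (s : ℕ → α) (T : Finset α)
    {k : α} (hk : k ∈ T) (c n : ℕ) (hc : ∀ j ∈ T, j ≠ k → c ≤ #{m ∈ range n | s m = j}) :
    #{m ∈ range n | s m = k} + (#T - 1) * c ≤ n := by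
  have hrest : (#T - 1) * c ≤ ∑ j ∈ T.erase k, #{m ∈ range n | s m = j} := by
    rw [← card_erase_of_mem hk, ← smul_eq_mul]
    exact card_nsmul_le_sum _ _ _ fun j hj => hc j (mem_of_mem_erase hj) (ne_of_mem_erase hj)
  calc #{m ∈ range n | s m = k} + (#T - 1) * c
      ≤ ∑ j ∈ T, #{m ∈ range n | s m = j} := by
        rw [← add_sum_erase T _ hk]; omega
    _ = #{m ∈ range n | s m ∈ T} := sum_card_fiberwise_eq_card_filter _ _ _
    _ ≤ n := (card_filter_le _ _).trans (card_range n).le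

lemma limsup_div_le_of_add_mul_div_le (a : ℕ → ℕ) (c : ℕ) {β : ℕ} (hβ : 0 < β)
    (h : ∀ n, a n + c * (n / β) ≤ n) :
    limsup (fun n => (a n : ℝ) / n) atTop ≤ 1 - (c : ℝ) / β := by
  set L : ℝ := 1 - (c : ℝ) / β
  have hbound : ∀ᶠ n : ℕ in atTop, (a n : ℝ) / n ≤ L + c / n := by
    filter_upwards [eventually_gt_atTop 0] with n hn
    have hn' : (0 : ℝ) < n := by exact_mod_cast hn
    have hfloor : (n : ℝ) / β < (n / β : ℕ) + 1 := by
      simpa [Nat.floor_div_eq_div] using Nat.lt_floor_add_one ((n : ℝ) / β)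
    have hcount : (a n : ℝ) + c * (n / β : ℕ) ≤ n := by exact_mod_cast h n
    have : (a n : ℝ) ≤ n - c * ((n : ℝ) / β - 1) := by
      nlinarith [mul_le_mul_of_nonneg_left hfloor.le (Nat.cast_nonneg c : (0 : ℝ) ≤ c)]
    rw [div_le_iff₀ hn']
    calc (a n : ℝ) ≤ n - c * ((n : ℝ) / β - 1) := this
      _ = (L + c / n) * n := by simp only [L]; field_simp; ring
  have hlim : Tendsto (fun n : ℕ => L + c / n) atTop (𝓝 L) := by
    simpa using tendsto_const_nhds.add (tendsto_const_div_atTop_nhds_zero_nat (c : ℝ))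
  calc limsup (fun n => (a n : ℝ) / n) atTop
      ≤ limsup (fun n : ℕ => L + c / n) atTop :=
        limsup_le_limsup hbound (isCoboundedUnder_le_of_le atTop fun n => by positivity)
          hlim.isBoundedUnder_le
    _ = L := hlim.limsup_eq

theorem stmt_3_general (G β : ℕ)
    (s : ℕ → Fin (G + 1))
    (hfair : ∀ k : Fin (G + 1), k ≠ 0 →
      (∃ m < β, s m = k) ∧
      (∀ m₁, s m₁ = k → ∃ m₂, m₁ < m₂ ∧ m₂ ≤ m₁ + β ∧ s m₂ = k)) :
    ∀ k : Fin (G + 1), k ≠ 0 →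
      Filter.limsup
        (fun n : ℕ => (((Finset.range n).filter (fun m => s m = k)).card : ℝ) / n)
        Filter.atTop ≤ 1 - ((G : ℝ) - 1) / (β : ℝ) := by
  intro k hk
  have hG : 1 ≤ G := by have := Fin.pos_iff_ne_zero.2 hk; omega
  have hβ : 0 < β := by obtain ⟨m, hm, -⟩ := (hfair k hk).1; omega
  have hcount (n : ℕ) : #{m ∈ range n | s m = k} + (G - 1) * (n / β) ≤ n := by
    have hT : #(univ.erase (0 : Fin (G + 1))) = G := by simp
    have := card_filter_range_add_mul_le s _ (mem_erase.2 ⟨hk, mem_univ k⟩) (n / β) n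
      fun j hj _ => by
        obtain ⟨h₀, hgap⟩ := hfair j (ne_of_mem_erase hj)
        exact div_le_card_filter_range_of_bounded_gaps (s · = j) h₀ hgap n
    rwa [hT] at this
  simpa [Nat.cast_sub hG] using limsup_div_le_of_add_mul_div_le _ (G - 1) hβ hcount

/-- limsup frequency upper bound under β-bounded repetition fairness. -/
theorem stmt_3 (G β : ℕ) (hG : 1 ≤ G)
    (s : ℕ → Fin (G + 1))
    (hfair : ∀ k : Fin (G + 1), k ≠ 0 →
      (∃ m < β, s m = k) ∧
      (∀ m₁, s m₁ = k → ∃ m₂, m₁ < m₂ ∧ m₂ ≤ m₁ + β ∧ s m₂ = k)) :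
    ∀ k : Fin (G + 1), k ≠ 0 →
      Filter.limsup
        (fun n : ℕ => (((Finset.range n).filter (fun m => s m = k)).card : ℝ) / n)
        Filter.atTop ≤ 1 - ((G : ℝ) - 1) / (β : ℝ) :=
  stmt_3_general G β s hfair
end

section
/- Let K ≥ 2 concept grouping functions each take values in {1,...,c} with c ≥ 2. Full intersectional fairness with eventual appearance on a finite sequence of length n (every combination of values of all K functions appears on some element) requires n ≥ c^K. In contrast, for c = 2, there exists a finite sequence of K-tuples of length at most 2⌈log₂ K⌉ + 2 such that for every pair of distinct indices x ≠ y and every pair of values (v₁, v₂) ∈ {1,2}², some element t of the sequence satisfies t(x) = v₁ and t(y) = v₂. -/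
/-- full intersectional fairness needs length ≥ c^K, while for binary
values a sequence of length at most 2⌈log₂ K⌉ + 2 suffices for all-paired fairness. -/
theorem stmt_7 (K c : ℕ) (hK : 2 ≤ K) (hc : 2 ≤ c) :
    (∀ (n : ℕ) (t : Fin n → Fin K → Fin c),
      (∀ v : Fin K → Fin c, ∃ i, t i = v) → c ^ K ≤ n) ∧
    (∃ n : ℕ, n ≤ 2 * Nat.clog 2 K + 2 ∧
      ∃ t : Fin n → Fin K → Fin 2,
        ∀ x y : Fin K, x ≠ y → ∀ v₁ v₂ : Fin 2,
          ∃ i, t i x = v₁ ∧ t i y = v₂) := by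
  constructor
  · intro n t hsurj
    have := Fintype.card_le_of_surjective t (fun v => hsurj v)
    simpa using this
  · set L := Nat.clog 2 K with hL
    refine ⟨2 * L + 2, le_refl _, ?_⟩
    have hKle : K ≤ 2 ^ L := Nat.le_pow_clog (by norm_num) K
    refine ⟨fun i x =>
      if (i : ℕ) < L then (if x.val.testBit i then 1 else 0)
      else if (i : ℕ) < 2 * L then (if x.val.testBit ((i : ℕ) - L) then 0 else 1)
      else if (i : ℕ) = 2 * L then 0 else 1, ?_⟩
    intro x y hxy v₁ v₂
    -- find differing bit
    have hx : (x : ℕ) ≠ (y : ℕ) := fun h => hxy (Fin.ext h)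
    obtain ⟨b, hb⟩ : ∃ b, (x : ℕ).testBit b ≠ (y : ℕ).testBit b := by
      by_contra h
      push_neg at h
      exact hx (Nat.eq_of_testBit_eq h)
    have hbL : b < L := by
      by_contra h
      push_neg at h
      have hx' : (x : ℕ).testBit b = false :=
        Nat.testBit_lt_two_pow (lt_of_lt_of_le x.isLt (hKle.trans (Nat.pow_le_pow_right (by norm_num) h)))
      have hy' : (y : ℕ).testBit b = false :=
        Nat.testBit_lt_two_pow (lt_of_lt_of_le y.isLt (hKle.trans (Nat.pow_le_pow_right (by norm_num) h)))
      exact hb (hx'.trans hy'.symm)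
    fin_cases v₁ <;> fin_cases v₂
    · -- (0,0)
      refine ⟨⟨2 * L, by omega⟩, ?_⟩
      simp
      omega
    · -- (0,1): need bit row
      cases hxb : (x : ℕ).testBit b
      · refine ⟨⟨b, by omega⟩, ?_⟩
        have hyb : (y : ℕ).testBit b = true := by
          cases hyb : (y : ℕ).testBit b
          · exact absurd (hxb.trans hyb.symm) hb
          · rfl
        simp [hbL, hxb, hyb]
      · refine ⟨⟨b + L, by omega⟩, ?_⟩
        have hyb : (y : ℕ).testBit b = false := by
          cases hyb : (y : ℕ).testBit b
          · rfl
          · exact absurd (hxb.trans hyb.symm) hb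
        have h1 : ¬ (b + L < L) := by omega
        have h2 : b + L < 2 * L := by omega
        simp [h1, h2, hxb, hyb]
    · -- (1,0)
      cases hxb : (x : ℕ).testBit b
      · refine ⟨⟨b + L, by omega⟩, ?_⟩
        have hyb : (y : ℕ).testBit b = true := by
          cases hyb : (y : ℕ).testBit b
          · exact absurd (hxb.trans hyb.symm) hb
          · rfl
        have h1 : ¬ (b + L < L) := by omega
        have h2 : b + L < 2 * L := by omega
        simp [h1, h2, hxb, hyb]
      · refine ⟨⟨b, by omega⟩, ?_⟩
        have hyb : (y : ℕ).testBit b = false := by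
          cases hyb : (y : ℕ).testBit b
          · rfl
          · exact absurd (hxb.trans hyb.symm) hb
        simp [hbL, hxb, hyb]
    · -- (1,1)
      refine ⟨⟨2 * L + 1, by omega⟩, ?_⟩
      simp
      omega
end

section
/- Consider the enforcement invariant: an array c : Fin G → ℤ (G ≥ 1) of counters with rule 'at each step, one index i is selected, c(i) is reset to β, and all other counters are decremented by 1', starting from c(i) = β for all i, with β ≥ G + 1. Suppose the selection policy guarantees: whenever there exist k distinct indices whose counters all equal k (for any k ∈ {1,...,G}), one of those indices is selected (checking from k = G down to k = 1). Then all counters remain positive forever, i.e., no deadline is ever violated. -/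
/-- correctness of the enforcement counter system — under the
lookahead policy, all counters remain positive forever. -/
theorem stmt_10 (G : ℕ) (hG : 1 ≤ G) (β : ℤ) (hβ : (G : ℤ) + 1 ≤ β)
    (c : ℕ → Fin G → ℤ) (sel : ℕ → Fin G)
    (hinit : ∀ i, c 0 i = β)
    (hstep : ∀ t i, c (t + 1) i = if i = sel t then β else c t i - 1)
    (hpol : ∀ t : ℕ, ∀ k : ℕ, 1 ≤ k → k ≤ G →
      k ≤ (Finset.univ.filter (fun i => c t i = (k : ℤ))).card →
      sel t ∈ Finset.univ.filter (fun i => c t i = (k : ℤ))) :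
    ∀ t : ℕ, ∀ i : Fin G, 0 < c t i := by
  have hGZ : (1 : ℤ) ≤ (G : ℤ) := by exact_mod_cast hG
  have hcardle : ∀ (s : Finset (Fin G)), s.card ≤ G := by
    intro s
    calc s.card ≤ (Finset.univ : Finset (Fin G)).card := Finset.card_le_card (Finset.subset_univ s)
    _ = G := by simp
  suffices h : ∀ t, (∀ i, 1 ≤ c t i) ∧
      (∀ j : ℕ, 1 ≤ j →
        (Finset.univ.filter (fun i => c t i = (j : ℤ))).card ≤ j) by
    intro t i
    have := (h t).1 i
    linarith
  intro t
  induction t with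
  | zero =>
    constructor
    · intro i; rw [hinit]; linarith
    · intro j hj
      by_cases hbj : β = (j : ℤ)
      · have h1 : (Finset.univ.filter (fun i => c 0 i = (j : ℤ))).card ≤ G := hcardle _
        have : (G : ℤ) < (j : ℤ) := by rw [← hbj]; linarith
        have : G < j := by exact_mod_cast this
        omega
      · have : (Finset.univ.filter (fun i => c 0 i = (j : ℤ))) = ∅ := by
          apply Finset.filter_false_of_mem
          intro i _
          rw [hinit]; exact hbj
        rw [this]; simp
  | succ t ih =>
    obtain ⟨hpos, hcard⟩ := ih
    have hpos' : ∀ i, 1 ≤ c (t + 1) i := by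
      intro i
      rw [hstep]
      by_cases hi : i = sel t
      · simp [hi]; linarith
      · simp [hi]
        -- need c t i ≥ 2
        by_contra hcon
        push_neg at hcon
        have h1 : c t i = 1 := by have := hpos i; omega
        have hmem : i ∈ Finset.univ.filter (fun i => c t i = (1 : ℤ)) := by
          simp [h1]
        have hc1 : 1 ≤ (Finset.univ.filter (fun i => c t i = ((1:ℕ) : ℤ))).card := by
          push_cast
          exact Finset.card_pos.mpr ⟨i, hmem⟩
        have hsel := hpol t 1 le_rfl hG hc1
        push_cast at hsel
        have hle := hcard 1 le_rfl
        push_cast at hle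
        have h2 : ({i, sel t} : Finset (Fin G)) ⊆
            Finset.univ.filter (fun i => c t i = (1 : ℤ)) := by
          intro x hx
          simp at hx
          rcases hx with hx | hx <;> subst hx
          · exact hmem
          · exact hsel
        have h3 : ({i, sel t} : Finset (Fin G)).card = 2 := by
          rw [Finset.card_insert_of_notMem (by simpa using hi)]
          simp
        have := Finset.card_le_card h2
        omega
    refine ⟨hpos', ?_⟩
    intro j hj
    by_cases hbj : β = (j : ℤ)
    · have h1 : (Finset.univ.filter (fun i => c (t+1) i = (j : ℤ))).card ≤ G := hcardle _
      have : (G : ℤ) < (j : ℤ) := by rw [← hbj]; linarith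
      have : G < j := by exact_mod_cast this
      omega
    · have hsub : (Finset.univ.filter (fun i => c (t+1) i = (j : ℤ))) ⊆
          (Finset.univ.filter (fun i => c t i = ((j : ℤ) + 1))).erase (sel t) := by
        intro x hx
        simp only [Finset.mem_filter, Finset.mem_univ, true_and] at hx
        rw [hstep] at hx
        by_cases hxs : x = sel t
        · simp [hxs] at hx; exact absurd hx hbj
        · simp [hxs] at hx
          rw [Finset.mem_erase]
          refine ⟨hxs, ?_⟩
          simp only [Finset.mem_filter, Finset.mem_univ, true_and]
          linarith
      have hA := hcard (j + 1) (by omega)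
      push_cast at hA
      have hAG : (Finset.univ.filter (fun i => c t i = ((j : ℤ) + 1))).card ≤ G := hcardle _
      by_cases hle : (Finset.univ.filter (fun i => c t i = ((j : ℤ) + 1))).card ≤ j
      · calc (Finset.univ.filter (fun i => c (t+1) i = (j : ℤ))).card
            ≤ ((Finset.univ.filter (fun i => c t i = ((j : ℤ) + 1))).erase (sel t)).card :=
              Finset.card_le_card hsub
          _ ≤ (Finset.univ.filter (fun i => c t i = ((j : ℤ) + 1))).card :=
              Finset.card_erase_le
          _ ≤ j := hle
      · push_neg at hle
        -- card = j + 1, and policy forces sel t into the set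
        have hc : j + 1 ≤ (Finset.univ.filter (fun i => c t i = (((j+1 : ℕ)) : ℤ))).card := by
          push_cast; omega
        have hj1G : j + 1 ≤ G := by
          have : j + 1 ≤ (Finset.univ.filter (fun i => c t i = ((j : ℤ) + 1))).card := by
            push_cast at hc; exact hc
          omega
        have hsel := hpol t (j + 1) (by omega) hj1G hc
        push_cast at hsel
        have hcarde := Finset.card_erase_of_mem hsel
        calc (Finset.univ.filter (fun i => c (t+1) i = (j : ℤ))).card
            ≤ ((Finset.univ.filter (fun i => c t i = ((j : ℤ) + 1))).erase (sel t)).card :=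
              Finset.card_le_card hsub
          _ = (Finset.univ.filter (fun i => c t i = ((j : ℤ) + 1))).card - 1 := hcarde
          _ ≤ j := by omega
end

section
/- In the counter system of the enforcement algorithm (G counters, all initialized to β ≥ G+1; each step one counter is reset to β and the others decremented by 1), at any reachable state all counters are distinct whenever they are at most G: formally, under the policy that selects a critical index whenever k distinct counters equal k, it is an invariant that for every k ∈ {1,...,G}, at most k counters have value ≤ k. -/
/-- Counting lemma: if all counters are ≥ 1, ≥ v, pairwise distinct except at
value v, and the multiplicity of v is at most v, then at most k counters are ≤ k. -/
private lemma count_aux (G : ℕ) (c : Fin G → ℤ) (v : ℤ) (k : ℕ)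
    (h1 : ∀ i, 1 ≤ c i) (h3 : ∀ i, v ≤ c i)
    (h2 : ∀ i j : Fin G, i ≠ j → c i = c j → c i = v)
    (h4 : ∀ i, c i = v → ((Finset.univ.filter (fun j => c j = v)).card : ℤ) ≤ v) :
    (Finset.univ.filter (fun i => c i ≤ (k : ℤ))).card ≤ k := by
  classical
  set A := Finset.univ.filter (fun i => c i ≤ (k : ℤ)) with hA
  by_cases hex : ∃ i, c i = v ∧ c i ≤ (k : ℤ)
  · obtain ⟨i0, hi0v, hi0k⟩ := hex
    have hv1 : 1 ≤ v := hi0v ▸ h1 i0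
    have hvk : v ≤ (k : ℤ) := hi0v ▸ hi0k
    have hsplit := Finset.card_filter_add_card_filter_not
      (s := A) (p := fun i => c i = v)
    have hEQ : ((A.filter (fun i => c i = v)).card : ℤ) ≤ v := by
      have hsub : (A.filter (fun i => c i = v)) ⊆
          Finset.univ.filter (fun j => c j = v) := by
        intro x hx
        simp only [Finset.mem_filter, hA] at hx ⊢
        exact ⟨Finset.mem_univ x, hx.2⟩
      have := Finset.card_le_card hsub
      have h4' := h4 i0 hi0v
      omega
    have hNE : ((A.filter (fun i => ¬ c i = v)).card : ℤ) ≤ (k : ℤ) - v := by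
      have hmaps : ∀ x ∈ A.filter (fun i => ¬ c i = v),
          c x ∈ Finset.Icc (v + 1) (k : ℤ) := by
        intro x hx
        simp only [Finset.mem_filter, hA, Finset.mem_univ, true_and] at hx
        have := h3 x
        simp only [Finset.mem_Icc]
        omega
      have hinj : Set.InjOn c (A.filter (fun i => ¬ c i = v)) := by
        intro x hx y hy hxy
        by_contra hne
        have := h2 x y hne hxy
        simp only [Finset.coe_filter, Set.mem_setOf_eq] at hx
        exact hx.2 this
      have hcard := Finset.card_le_card_of_injOn c hmaps hinj
      rw [Int.card_Icc] at hcard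
      have : ((k : ℤ) + 1 - (v + 1)).toNat = ((k : ℤ) - v).toNat := by ring_nf
      rw [this] at hcard
      have h0 : (0:ℤ) ≤ (k : ℤ) - v := by omega
      have := Int.toNat_of_nonneg h0
      omega
    omega
  · -- no counter with value v is ≤ k : all counters in A are pairwise distinct
    push_neg at hex
    have hmaps : ∀ x ∈ A, c x ∈ Finset.Icc (1 : ℤ) (k : ℤ) := by
      intro x hx
      simp only [Finset.mem_filter, hA, Finset.mem_univ, true_and] at hx
      have := h1 x
      simp only [Finset.mem_Icc]
      omega
    have hinj : Set.InjOn c A := by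
      intro x hx y hy hxy
      by_contra hne
      have hv := h2 x y hne hxy
      simp only [Finset.coe_filter, Set.mem_setOf_eq, hA, Finset.mem_univ,
        true_and] at hx
      exact absurd hx (not_le.mpr (hex x hv))
    have hcard := Finset.card_le_card_of_injOn c hmaps hinj
    rw [Int.card_Icc] at hcard
    have : ((k : ℤ) + 1 - 1).toNat = k := by simp
    omega

/-- invariant of the enforcement counter system — for each
k ∈ {1,...,G}, at most k counters have value ≤ k. -/
theorem stmt_11 (G : ℕ) (hG : 1 ≤ G) (β : ℤ) (hβ : (G : ℤ) + 1 ≤ β)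
    (c : ℕ → Fin G → ℤ) (sel : ℕ → Fin G)
    (hinit : ∀ i, c 0 i = β)
    (hstep : ∀ t i, c (t + 1) i = if i = sel t then β else c t i - 1)
    (hpol : ∀ t : ℕ, ∀ k : ℕ, 1 ≤ k → k ≤ G →
      k ≤ (Finset.univ.filter (fun i => c t i = (k : ℤ))).card →
      sel t ∈ Finset.univ.filter (fun i => c t i = (k : ℤ))) :
    ∀ t : ℕ, ∀ k : ℕ, 1 ≤ k → k ≤ G →
      (Finset.univ.filter (fun i => c t i ≤ (k : ℤ))).card ≤ k := by
  classical
  have INV : ∀ t : ℕ,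
      (∀ i, 1 ≤ c t i ∧ c t i ≤ β ∧ β - (t : ℤ) ≤ c t i) ∧
      (∀ i j : Fin G, i ≠ j → c t i = c t j → c t i = β - (t : ℤ)) ∧
      (∀ i, c t i = β - (t : ℤ) →
        ((Finset.univ.filter (fun j => c t j = β - (t : ℤ))).card : ℤ)
          ≤ β - (t : ℤ)) := by
    intro t
    induction t with
    | zero =>
      refine ⟨fun i => ?_, fun i j _ _ => ?_, fun i _ => ?_⟩
      · rw [hinit i]; push_cast; omega
      · rw [hinit i]; push_cast; ring
      · have : (Finset.univ.filter (fun j => c 0 j = β - ((0:ℕ) : ℤ)))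
            = Finset.univ := by
          apply Finset.filter_true_of_mem
          intro x _
          rw [hinit x]; push_cast; ring
        rw [this, Finset.card_univ, Fintype.card_fin]
        push_cast; omega
    | succ t ih =>
      obtain ⟨ih1, ih2, ih3⟩ := ih
      set s := sel t with hs
      -- key step: every non-selected counter is ≥ 2
      have hkey : ∀ i : Fin G, i ≠ s → 2 ≤ c t i := by
        intro i hi
        by_contra hlt
        have hci : c t i = 1 := by have := (ih1 i).1; omega
        have hmem : i ∈ Finset.univ.filter (fun j => c t j = ((1:ℕ) : ℤ)) := by
          simp [hci]
        have hcard1 : 1 ≤ (Finset.univ.filter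
            (fun j => c t j = ((1:ℕ) : ℤ))).card :=
          Finset.card_pos.mpr ⟨i, hmem⟩
        have hsel := hpol t 1 le_rfl hG hcard1
        simp only [Finset.mem_filter] at hsel
        have hcs : c t s = 1 := by exact_mod_cast hsel.2
        have heq : c t i = c t s := by rw [hci, hcs]
        have hv : c t i = β - (t : ℤ) := ih2 i s hi heq
        have hvt : β - (t : ℤ) = 1 := by omega
        have hcard := ih3 i hv
        have hsub : ({i, s} : Finset (Fin G)) ⊆
            Finset.univ.filter (fun j => c t j = β - (t : ℤ)) := by
          intro x hx
          simp only [Finset.mem_insert, Finset.mem_singleton] at hx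
          rcases hx with rfl | rfl <;> simp [hv, hcs, hvt]
        have h2card : ({i, s} : Finset (Fin G)).card = 2 :=
          Finset.card_pair hi
        have := Finset.card_le_card hsub
        omega
      have hnew : ∀ i : Fin G, c (t + 1) i = if i = s then β else c t i - 1 :=
        fun i => hstep t i
      have hcast : ((t + 1 : ℕ) : ℤ) = (t : ℤ) + 1 := by push_cast; ring
      refine ⟨fun i => ?_, fun i j hij heq => ?_, fun i hi => ?_⟩
      · rw [hnew i, hcast]
        by_cases h : i = s
        · rw [if_pos h]; omega
        · rw [if_neg h]
          have h2' := hkey i h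
          have h3' := (ih1 i).2.1
          have h4' := (ih1 i).2.2
          omega
      · rw [hnew i, hnew j] at heq
        rw [hnew i, hcast]
        by_cases hi : i = s
        · exfalso
          have hj : ¬ j = s := fun h => hij (hi.trans h.symm)
          rw [if_pos hi, if_neg hj] at heq
          have := (ih1 j).2.1
          omega
        · rw [if_neg hi]
          by_cases hj : j = s
          · exfalso
            rw [if_neg hi, if_pos hj] at heq
            have := (ih1 i).2.1
            omega
          · rw [if_neg hi, if_neg hj] at heq
            have hcij : c t i = c t j := by omega
            have := ih2 i j hij hcij
            omega
      · -- multiplicity bound at time t+1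
        rw [hcast] at hi ⊢
        rw [hnew i] at hi
        have his : i ≠ s := by
          intro h
          rw [if_pos h] at hi
          omega
        rw [if_neg his] at hi
        have hiv : c t i = β - (t : ℤ) := by omega
        have hm := ih3 i hiv
        set S := Finset.univ.filter (fun j => c t j = β - (t : ℤ)) with hS
        have hiS : i ∈ S := by simp [hS, hiv]
        have hm1 : 1 ≤ S.card := Finset.card_pos.mpr ⟨i, hiS⟩
        have hv1 : 1 ≤ β - (t : ℤ) := by omega
        have hSsub : Finset.univ.filter
            (fun j => c (t + 1) j = β - ((t : ℤ) + 1)) ⊆ S.erase s ∪ S := by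
          intro x hx
          simp only [Finset.mem_filter, Finset.mem_univ, true_and] at hx
          rw [hnew x] at hx
          have hxs : x ≠ s := by
            intro h; rw [if_pos h] at hx; omega
          rw [if_neg hxs] at hx
          have : x ∈ S := by simp [hS]; omega
          exact Finset.mem_union_right _ this
        -- refine: the new class is contained in S minus s (when c t s = v), else in S
        by_cases hcs : c t s = β - (t : ℤ)
        · have hsub' : Finset.univ.filter
              (fun j => c (t + 1) j = β - ((t : ℤ) + 1)) ⊆ S.erase s := by
            intro x hx
            simp only [Finset.mem_filter, Finset.mem_univ, true_and] at hx
            rw [hnew x] at hx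
            have hxs : x ≠ s := by
              intro h; rw [if_pos h] at hx; omega
            rw [if_neg hxs] at hx
            refine Finset.mem_erase.mpr ⟨hxs, ?_⟩
            simp [hS]; omega
          have hsS : s ∈ S := by simp [hS, hcs]
          have hcarderase : (S.erase s).card = S.card - 1 :=
            Finset.card_erase_of_mem hsS
          have := Finset.card_le_card hsub'
          omega
        · -- here the multiplicity m must be < β - t, else policy forces s into S
          have hsub' : Finset.univ.filter
              (fun j => c (t + 1) j = β - ((t : ℤ) + 1)) ⊆ S := by
            intro x hx
            simp only [Finset.mem_filter, Finset.mem_univ, true_and] at hx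
            rw [hnew x] at hx
            have hxs : x ≠ s := by
              intro h; rw [if_pos h] at hx; omega
            rw [if_neg hxs] at hx
            simp [hS]; omega
          have hle := Finset.card_le_card hsub'
          have hmne : (S.card : ℤ) ≠ β - (t : ℤ) := by
            intro hmeq
            have hkG : S.card ≤ G := by
              have := Finset.card_le_card (Finset.subset_univ S)
              simpa [Finset.card_univ] using this
            have hcastm : ((S.card : ℕ) : ℤ) = β - (t : ℤ) := hmeq
            have hSeq : S = Finset.univ.filter
                (fun j => c t j = ((S.card : ℕ) : ℤ)) := by
              rw [hS]
              apply Finset.filter_congr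
              intro x _
              rw [hcastm]
            have hsel := hpol t S.card hm1 hkG (by rw [← hSeq])
            rw [← hSeq] at hsel
            simp only [hS, Finset.mem_filter] at hsel
            exact hcs hsel.2
          omega
  intro t k hk1 hkG
  obtain ⟨h1, h2, h3⟩ := INV t
  exact count_aux G (c t) (β - (t : ℤ)) k (fun i => (h1 i).1)
    (fun i => (h1 i).2.2) h2 h3
end

section
/- A finite sequence that is β-bounded-repetition fair under the weak-next (finite-trace) semantics and additionally has, for every k ∈ {1,...,G}, an occurrence of k in the final β positions, can be extended to an infinite periodic sequence that is β-bounded-repetition fair under the infinite semantics, provided β ≥ G: formally, if s : Fin n → Fin (G+1) satisfies the finite fairness conditions and each k ∈ {1,...,G} occurs among positions n−β,...,n−1, then there exists an infinite sequence t : ℕ → Fin (G+1) with t(m) = s(m) for m < n that is β-bounded-repetition fair in the infinite sense. -/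
/-- Extension of a finite sequence by repeating its last `β` entries. -/
def tExt (n β : ℕ) {α : Type*} (s : Fin n → α) (d : α) : ℕ → α
  | m => if h : m < n then s ⟨m, h⟩
         else if _ : 0 < β ∧ 0 < n then tExt n β s d (m - β) else d
termination_by m => m
decreasing_by omega

/-- a finitely fair sequence (weak-next semantics) with every value
occurring in the final β positions extends to an infinitely β-fair sequence. -/
theorem stmt_16 (G β n : ℕ) (hG : 1 ≤ G) (hβ : G ≤ β) (hn : β < n)
    (s : Fin n → Fin (G + 1))
    (hfair : ∀ k : Fin (G + 1), k ≠ 0 →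
      (∃ m : Fin n, m.val < β ∧ s m = k) ∧
      (∀ m₁ : Fin n, s m₁ = k →
        (∃ m₂ : Fin n, m₁.val < m₂.val ∧ m₂.val ≤ m₁.val + β ∧ s m₂ = k) ∨
        n ≤ m₁.val + β))
    (hlast : ∀ k : Fin (G + 1), k ≠ 0 →
      ∃ m : Fin n, n - β ≤ m.val ∧ s m = k) :
    ∃ t : ℕ → Fin (G + 1),
      (∀ m : Fin n, t m.val = s m) ∧
      (∀ k : Fin (G + 1), k ≠ 0 →
        (∃ m < β, t m = k) ∧
        (∀ m₁, t m₁ = k → ∃ m₂, m₁ < m₂ ∧ m₂ ≤ m₁ + β ∧ t m₂ = k)) := by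
  have hβ1 : 0 < β := by omega
  have hn0 : 0 < n := by omega
  set t := tExt n β s 0 with ht
  have heq : ∀ m, t m = if h : m < n then s ⟨m, h⟩ else t (m - β) := by
    intro m
    rw [ht, tExt]
    simp [hβ1, hn0]
  have hlt : ∀ m (h : m < n), t m = s ⟨m, h⟩ := fun m h => by rw [heq]; simp [h]
  have hper : ∀ m, n ≤ m + β → t (m + β) = t m := by
    intro m hm
    rw [heq (m + β)]
    have h1 : ¬ (m + β < n) := by omega
    simp [h1]
  refine ⟨t, fun m => by rw [hlt m.val m.isLt], fun k hk => ⟨?_, ?_⟩⟩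
  · obtain ⟨m, hmβ, hsm⟩ := (hfair k hk).1
    exact ⟨m.val, hmβ, by rw [hlt m.val m.isLt]; simpa using hsm⟩
  · intro m₁ hm₁
    by_cases hc : n ≤ m₁ + β
    · exact ⟨m₁ + β, by omega, le_rfl, by rw [hper m₁ hc]; exact hm₁⟩
    · have hm₁n : m₁ < n := by omega
      have := (hfair k hk).2 ⟨m₁, hm₁n⟩ (by rw [← hlt m₁ hm₁n]; exact hm₁)
      rcases this with ⟨m₂, h1, h2, h3⟩ | h
      · exact ⟨m₂.val, h1, h2, by rw [hlt m₂.val m₂.isLt]; simpa using h3⟩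
      · exact absurd h hc
end
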